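/- Let k ≥ 3, J ∈ {1,…,k}, ε ∈ {+1,−1}, and let s̃ = N(ε·e_J) be the z-score normalization of the signed standard basis vector. Then the coordinate of maximal absolute value of s̃ is unique and equals J (i.e., |s̃_J| > |s̃_j| for all j ≠ J), and sign(s̃_J) = ε; consequently the restore operator R(s̃) := sign(s̃_{argmax_j |s̃_j|})·e_{argmax_j |s̃_j|} satisfies R(s̃) = ε·e_J. -/

import Mathlib

noncomputable def coordMean {k : ℕ} (x : Fin k → ℝ) : ℝ :=
  (∑ i, x i) / k

noncomputable def coordStd {k : ℕ} (x : Fin k → ℝ) : ℝ :=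
  Real.sqrt ((∑ i, (x i - coordMean x) ^ 2) / k)

noncomputable def zscore {k : ℕ} (x : Fin k → ℝ) : Fin k → ℝ :=
  fun j => (x j - coordMean x) / coordStd x

noncomputable def argmaxAbs {k : ℕ} [NeZero k] (v : Fin k → ℝ) : Fin k :=
  (Finset.exists_max_image Finset.univ (fun j => |v j|) Finset.univ_nonempty).choose

noncomputable def restore {k : ℕ} [NeZero k] (v : Fin k → ℝ) : Fin k → ℝ :=
  fun j => Real.sign (v (argmaxAbs v)) * (if j = argmaxAbs v then 1 else 0)

lemma argmaxAbs_spec {k : ℕ} [NeZero k] (v : Fin k → ℝ) (j : Fin k) :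
    |v j| ≤ |v (argmaxAbs v)| := by
  have h := (Finset.exists_max_image Finset.univ (fun j => |v j|)
    Finset.univ_nonempty).choose_spec
  exact h.2 j (Finset.mem_univ j)

lemma zscore_signed_basis (k : ℕ) (hk : 3 ≤ k) (J : Fin k) (ε : ℝ) (hε : ε = 1 ∨ ε = -1) :
    zscore (fun j' => ε * (if j' = J then 1 else 0))
      = fun j => if j = J then ε * Real.sqrt ((k:ℝ) - 1) else -ε / Real.sqrt ((k:ℝ) - 1) := by
  have hc3 : (3:ℝ) ≤ (k:ℝ) := by exact_mod_cast hk
  set c : ℝ := (k : ℝ) with hc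
  have hc0 : (0:ℝ) < c := by linarith
  have hcne : c ≠ 0 := hc0.ne'
  have h1 : (0:ℝ) < c - 1 := by linarith
  have hs : (0:ℝ) < Real.sqrt (c - 1) := Real.sqrt_pos.mpr h1
  have hsne : Real.sqrt (c - 1) ≠ 0 := hs.ne'
  have hss : Real.sqrt (c - 1) * Real.sqrt (c - 1) = c - 1 := Real.mul_self_sqrt h1.le
  have hε2 : ε ^ 2 = 1 := by rcases hε with h | h <;> simp [h]
  set x : Fin k → ℝ := fun j' => ε * (if j' = J then 1 else 0) with hx
  have hxJ : x J = ε := by rw [hx]; simp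
  have hxo : ∀ i, i ≠ J → x i = 0 := by intro i hi; rw [hx]; simp [hi]
  have hmean : coordMean x = ε / c := by
    rw [coordMean, ← hc]
    congr 1
    rw [hx]
    rw [← Finset.mul_sum]
    simp [Finset.sum_ite_eq']
  have hsum : (∑ i, (x i - coordMean x) ^ 2) = (c - 1) / c := by
    have heq : ∀ i, (x i - coordMean x) ^ 2
        = (if i = J then (ε * (c-1)/c)^2 - (ε/c)^2 else 0) + (ε/c)^2 := by
      intro i
      by_cases h : i = J
      · rw [if_pos h, h, hxJ, hmean]; field_simp; ring
      · rw [if_neg h, hxo i h, hmean]; ring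
    rw [Finset.sum_congr rfl (fun i _ => heq i), Finset.sum_add_distrib,
      Finset.sum_ite_eq' Finset.univ J, Finset.sum_const]
    simp only [Finset.mem_univ, if_true, Finset.card_univ, Fintype.card_fin, nsmul_eq_mul, ← hc]
    field_simp
    linear_combination (c^2 - c) * hε2
  have hstd : coordStd x = Real.sqrt (c - 1) / c := by
    rw [coordStd, hsum, ← hc, div_div, show c * c = c^2 by ring,
      Real.sqrt_div h1.le, Real.sqrt_sq hc0.le]
  have hstdpos : (0:ℝ) < coordStd x := by rw [hstd]; positivity
  funext j
  show (x j - coordMean x) / coordStd x = _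
  rw [div_eq_iff hstdpos.ne', hmean, hstd]
  by_cases h : j = J
  · rw [if_pos h, h, hxJ]
    field_simp
    linear_combination (-ε) * hss
  · rw [if_neg h, hxo j h]
    field_simp
    ring

/-- **The restore operator recovers the signed 1-sparse report from its normalization.**
For `k ≥ 3`, `ε ∈ {+1,-1}` and `s̃ = N(ε • e_J)`, the coordinate of maximal absolute
value of `s̃` is unique and equals `J`, its sign is `ε`, and `R(s̃) = ε • e_J`. -/
theorem restore_of_zscore_signed_basis
    (k : ℕ) [NeZero k] (hk : 3 ≤ k) (J : Fin k) (ε : ℝ) (hε : ε = 1 ∨ ε = -1) :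
    (∀ j, j ≠ J →
      |zscore (fun j' => ε * (if j' = J then 1 else 0)) j|
        < |zscore (fun j' => ε * (if j' = J then 1 else 0)) J|) ∧
    Real.sign (zscore (fun j' => ε * (if j' = J then 1 else 0)) J) = ε ∧
    restore (zscore (fun j' => ε * (if j' = J then 1 else 0)))
      = fun j => ε * (if j = J then 1 else 0) := by
  have hz := zscore_signed_basis k hk J ε hε
  have hc3 : (3:ℝ) ≤ (k:ℝ) := by exact_mod_cast hk
  set c : ℝ := (k : ℝ) with hc
  have h1 : (0:ℝ) < c - 1 := by linarith
  have hs : (0:ℝ) < Real.sqrt (c - 1) := Real.sqrt_pos.mpr h1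
  have hs1 : (1:ℝ) < Real.sqrt (c - 1) := by
    have := (Real.lt_sqrt zero_le_one).mpr (by nlinarith : (1:ℝ)^2 < c - 1)
    linarith
  have hεabs : |ε| = 1 := by rcases hε with h | h <;> simp [h]
  have hkey : ∀ j, j ≠ J →
      |zscore (fun j' => ε * (if j' = J then 1 else 0)) j|
        < |zscore (fun j' => ε * (if j' = J then 1 else 0)) J| := by
    intro j hj
    rw [hz]
    simp only [eq_self_iff_true, if_true, if_neg hj]
    rw [abs_div, abs_neg, hεabs, abs_mul, hεabs, one_mul, abs_of_pos hs,
      div_lt_iff₀ hs]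
    nlinarith
  have hsign : Real.sign (zscore (fun j' => ε * (if j' = J then 1 else 0)) J) = ε := by
    rw [hz]
    simp only [eq_self_iff_true, if_true]
    rcases hε with h | h
    · rw [h, one_mul, Real.sign_of_pos hs]
    · rw [h, neg_one_mul, Real.sign_of_neg (by linarith)]
  refine ⟨hkey, hsign, ?_⟩
  have hamax : argmaxAbs (zscore (fun j' => ε * (if j' = J then 1 else 0))) = J := by
    by_contra h
    exact absurd (argmaxAbs_spec _ J) (not_le.mpr (hkey _ h))
  funext j
  rw [restore, hamax, hsign]
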